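/- arXiv:2503.19612 — 3 statements merged into one kernel-verified Lean document; each statement's English description precedes it below -/
import Mathlib

section
/- (Off-policy gradient) Let μ be a full-support behavior policy and suppose each map θ ↦ π_θ(y|x) is Fréchet differentiable at θ₀. Then θ ↦ L_μ(π_θ) is Fréchet differentiable at θ₀ and its derivative equals −β · Σ_x ρ(x) · Σ_y μ(y|x) · (R^{π_{θ₀}}_β(x,y) − R^{π_{θ₀}}_β(x,μ)) · D_θ[log π_θ(y|x)](θ₀), where R^π_β(x,μ) = Σ_{y'} μ(y'|x)·R^π_β(x,y'). -/
open Finset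

noncomputable section

/-- The regularized reward `R^π_β(x,y)`. -/
def Rreg {X Y : Type*} (πref r : X → Y → ℝ) (β : ℝ) (π : X → Y → ℝ) (x : X) (y : Y) : ℝ :=
  r x y - β * Real.log (π x y / πref x y)

/-- Off-policy loss `L_μ(π)`. -/
def Lmu {X Y : Type*} [Fintype X] [Fintype Y] (ρ : X → ℝ) (πref r : X → Y → ℝ) (β : ℝ)
    (μ π : X → Y → ℝ) : ℝ :=
  (1 / 2) * ∑ x, ρ x * ∑ y, μ x y *
    (Rreg πref r β π x y - ∑ y', μ x y' * Rreg πref r β π x y') ^ 2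

/-!
For each prompt `x`, `L_μ` is half the `μ(·|x)`-variance of `y ↦ R^π_β(x,y)`, averaged over `ρ`.
The gradient of half a variance is the covariance of the values with their gradients: the
derivative of the mean drops out because the centred values have weighted mean zero. Finally
`D_θ R^{π_θ}_β(x,y) = -β · D_θ log π_θ(y|x)`, since `π_ref` does not depend on `θ`.
-/

section WeightedVariance

variable {ι E : Type*} [Fintype ι] [NormedAddCommGroup E] [NormedSpace ℝ E]

def halfVariance (w f : ι → ℝ) : ℝ :=
  (1 / 2) * ∑ i, w i * (f i - ∑ j, w j * f j) ^ 2

theorem sum_mul_sub_weightedMean {w : ι → ℝ} (hw : ∑ i, w i = 1) (f : ι → ℝ) :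
    ∑ i, w i * (f i - ∑ j, w j * f j) = 0 := by
  simp only [mul_sub, sum_sub_distrib, ← sum_mul, hw, one_mul, sub_self]

theorem hasFDerivAt_halfVariance {w : ι → ℝ} (hw : ∑ i, w i = 1) {f : E → ι → ℝ}
    {f' : ι → E →L[ℝ] ℝ} {θ : E} (hf : ∀ i, HasFDerivAt (fun θ => f θ i) (f' i) θ) :
    HasFDerivAt (fun θ => halfVariance w (f θ))
      (∑ i, (w i * (f θ i - ∑ j, w j * f θ j)) • f' i) θ := by
  have hcentred : ∀ i, HasFDerivAt (fun θ => f θ i - ∑ j, w j * f θ j)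
      (f' i - ∑ j, w j • f' j) θ := fun i =>
    (hf i).sub (HasFDerivAt.fun_sum fun j _ => (hf j).const_mul (w j))
  have hsum : HasFDerivAt (fun θ => halfVariance w (f θ))
      ((1 / 2 : ℝ) • ∑ i, w i • ((2 • (f θ i - ∑ j, w j * f θ j) ^ (2 - 1)) •
        (f' i - ∑ j, w j • f' j))) θ :=
    (HasFDerivAt.fun_sum fun i _ => ((hcentred i).pow 2).const_mul (w i)).const_mul _
  refine hsum.congr_fderiv ?_
  set g : ι → ℝ := fun i => f θ i - ∑ j, w j * f θ j
  calc (1 / 2 : ℝ) • ∑ i, w i • ((2 • g i ^ (2 - 1)) • (f' i - ∑ j, w j • f' j))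
      = ∑ i, (w i * g i) • (f' i - ∑ j, w j • f' j) := by
        simp only [smul_sum, smul_smul]
        exact sum_congr rfl fun i _ => by module
    _ = ∑ i, (w i * g i) • f' i - (∑ i, w i * g i) • ∑ j, w j • f' j := by
        simp only [smul_sub, sum_sub_distrib, sum_smul]
    _ = ∑ i, (w i * g i) • f' i := by
        rw [sum_mul_sub_weightedMean hw, zero_smul, sub_zero]

end WeightedVariance

theorem hasFDerivAt_log_div_const {E : Type*} [NormedAddCommGroup E] [NormedSpace ℝ E]
    {p : E → ℝ} {θ : E} (hp : DifferentiableAt ℝ p θ) (hpθ : p θ ≠ 0) {c : ℝ} (hc : c ≠ 0) :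
    HasFDerivAt (fun θ => Real.log (p θ / c)) (fderiv ℝ (fun θ => Real.log (p θ)) θ) θ := by
  rw [(hp.hasFDerivAt.log hpθ).fderiv]
  simp_rw [div_eq_mul_inv]
  refine ((hp.hasFDerivAt.mul_const c⁻¹).log (mul_ne_zero hpθ (inv_ne_zero hc))).congr_fderiv ?_
  rw [smul_smul]
  field_simp

theorem Lmu_eq_sum_halfVariance {X Y : Type*} [Fintype X] [Fintype Y] (ρ : X → ℝ)
    (πref r : X → Y → ℝ) (β : ℝ) (μ π : X → Y → ℝ) :
    Lmu ρ πref r β μ π = ∑ x, ρ x * halfVariance (μ x) (Rreg πref r β π x) := by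
  simp only [Lmu, halfVariance, mul_sum]
  exact sum_congr rfl fun x _ => sum_congr rfl fun y _ => by ring

theorem hasFDerivAt_Rreg {X Y E : Type*} [NormedAddCommGroup E] [NormedSpace ℝ E]
    (πref r : X → Y → ℝ) (β : ℝ) {π : E → X → Y → ℝ} {θ : E} {x : X} {y : Y}
    (hπ : DifferentiableAt ℝ (fun θ => π θ x y) θ) (hπθ : π θ x y ≠ 0) (hπref : πref x y ≠ 0) :
    HasFDerivAt (fun θ => Rreg πref r β (π θ) x y)
      ((-β) • fderiv ℝ (fun θ => Real.log (π θ x y)) θ) θ := by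
  rw [neg_smul]
  exact ((hasFDerivAt_log_div_const hπ hπθ hπref).const_mul β).const_sub (r x y)

theorem off_policy_gradient_general
    {X Y : Type*} [Fintype X] [Fintype Y]
    {Θ : Type*} [NormedAddCommGroup Θ] [NormedSpace ℝ Θ]
    (πref : X → Y → ℝ) (href_pos : ∀ x y, 0 < πref x y)
    (r : X → Y → ℝ) (β : ℝ)
    (ρ : X → ℝ)
    (μ : X → Y → ℝ) (hμ_sum : ∀ x, ∑ y, μ x y = 1)
    (π : Θ → X → Y → ℝ) (hpos : ∀ θ x y, 0 < π θ x y)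
    (θ₀ : Θ) (hdiff : ∀ x y, DifferentiableAt ℝ (fun θ => π θ x y) θ₀) :
    HasFDerivAt (fun θ => Lmu ρ πref r β μ (π θ))
      (∑ x, ∑ y,
        (-β * (ρ x * (μ x y *
          (Rreg πref r β (π θ₀) x y - ∑ y', μ x y' * Rreg πref r β (π θ₀) x y')))) •
          fderiv ℝ (fun θ => Real.log (π θ x y)) θ₀)
      θ₀ := by
  have hR x y := hasFDerivAt_Rreg πref r β (hdiff x y) (hpos θ₀ x y).ne' (href_pos x y).ne'
  simp only [Lmu_eq_sum_halfVariance]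
  refine (HasFDerivAt.fun_sum fun x _ =>
    (hasFDerivAt_halfVariance (hμ_sum x) (hR x)).const_mul (ρ x)).congr_fderiv ?_
  simp only [smul_sum, smul_smul]
  exact sum_congr rfl fun x _ => sum_congr rfl fun y _ => by module

/-- gradient of the off-policy loss. -/
theorem off_policy_gradient
    {X Y : Type*} [Fintype X] [Fintype Y] [Nonempty X] [Nonempty Y]
    {Θ : Type*} [NormedAddCommGroup Θ] [NormedSpace ℝ Θ]
    (πref : X → Y → ℝ) (href_pos : ∀ x y, 0 < πref x y)
    (href_sum : ∀ x, ∑ y, πref x y = 1)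
    (r : X → Y → ℝ) (β : ℝ) (hβ : 0 < β)
    (ρ : X → ℝ) (hρ_nonneg : ∀ x, 0 ≤ ρ x) (hρ_sum : ∑ x, ρ x = 1)
    (μ : X → Y → ℝ) (hμ_pos : ∀ x y, 0 < μ x y) (hμ_sum : ∀ x, ∑ y, μ x y = 1)
    (π : Θ → X → Y → ℝ) (hpos : ∀ θ x y, 0 < π θ x y) (hsum : ∀ θ x, ∑ y, π θ x y = 1)
    (θ₀ : Θ) (hdiff : ∀ x y, DifferentiableAt ℝ (fun θ => π θ x y) θ₀) :
    HasFDerivAt (fun θ => Lmu ρ πref r β μ (π θ))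
      (∑ x, ∑ y,
        (-β * (ρ x * (μ x y *
          (Rreg πref r β (π θ₀) x y - ∑ y', μ x y' * Rreg πref r β (π θ₀) x y')))) •
          fderiv ℝ (fun θ => Real.log (π θ x y)) θ₀)
      θ₀ :=
  off_policy_gradient_general πref href_pos r β ρ μ hμ_sum π hpos θ₀ hdiff
end
end

section
/- (Alignment of the pathwise derivative with the RLHF gradient) Suppose each map θ ↦ π_θ(y|x) is Fréchet differentiable at θ₀, and set μ = π_{θ₀}. Then the Fréchet derivative at θ₀ of θ ↦ L_μ(π_θ) equals −β times the Fréchet derivative at θ₀ of θ ↦ G(π_θ). -/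
open Finset

noncomputable section

/-- KL divergence between two (full-support) distributions on a finite type. -/
def KLdiv {Y : Type*} [Fintype Y] (p q : Y → ℝ) : ℝ :=
  ∑ y, p y * Real.log (p y / q y)

/-- The KL-regularized objective `G`. -/
def G {X Y : Type*} [Fintype X] [Fintype Y] (ρ : X → ℝ) (πref r : X → Y → ℝ) (β : ℝ)
    (π : X → Y → ℝ) : ℝ :=
  ∑ x, ρ x * ((∑ y, π x y * r x y) - β * KLdiv (π x) (πref x))

/-!
Write `∂` for the derivative at `θ₀` and `R = R^{π_θ}_β`. Since `∂R(x,y) = -β ∂π(y|x) / π_{θ₀}(y|x)`,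
on-policy weighting turns the derivative of the reward into the derivative of the policy:
`μ(y|x) ∂R(x,y) = -β ∂π(y|x)`, and `Σ_y ∂π(y|x) = 0` because `π_θ(·|x)` stays normalized.
Hence the `μ`-mean of `R` is stationary and
`∂L = Σ_x ρ(x) Σ_y μ(y|x) (R - R̄)(x,y) ∂R(x,y) = -β Σ_x ρ(x) Σ_y R(x,y) ∂π(y|x)`.
On the other side `G(π) = Σ_x ρ(x) Σ_y π(y|x) R^π_β(x,y)`, and the product rule with the same two
identities gives `∂G = Σ_x ρ(x) Σ_y R(x,y) ∂π(y|x)`.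
-/

section Weighted

variable {Y Θ : Type*} [Fintype Y] [NormedAddCommGroup Θ] [NormedSpace ℝ Θ]

theorem sum_fderiv_eq_zero_of_sum_const {F : Type*} [NormedAddCommGroup F] [NormedSpace ℝ F]
    {p : Θ → Y → F} {p' : Y → Θ →L[ℝ] F} {θ₀ : Θ} {c : F}
    (hsum : ∀ θ, ∑ y, p θ y = c) (hp : ∀ y, HasFDerivAt (fun θ => p θ y) (p' y) θ₀) :
    ∑ y, p' y = 0 := by
  have hconst : (fun θ => ∑ y, p θ y) = fun _ => c := funext hsum
  have h := HasFDerivAt.fun_sum (u := univ) fun y _ => hp y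
  rw [hconst] at h
  exact h.unique (hasFDerivAt_const c θ₀)

theorem sum_sub_const_smul_of_sum_eq_zero {M : Type*} [AddCommGroup M] [Module ℝ M]
    {a : Y → ℝ} (b : ℝ) {v : Y → M} (hv : ∑ y, v y = 0) :
    ∑ y, (a y - b) • v y = ∑ y, a y • v y := by
  simp only [sub_smul, sum_sub_distrib, ← smul_sum, hv, smul_zero, sub_zero]

theorem hasFDerivAt_sum_mul_sub_mean_sq {μ : Y → ℝ} {g : Θ → Y → ℝ} {g' : Y → Θ →L[ℝ] ℝ}
    {θ₀ : Θ} (hg : ∀ y, HasFDerivAt (fun θ => g θ y) (g' y) θ₀)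
    (hmean : ∑ y, μ y • g' y = 0) :
    HasFDerivAt (fun θ => ∑ y, μ y * (g θ y - ∑ y', μ y' * g θ y') ^ 2)
      (∑ y, (2 * (g θ₀ y - ∑ y', μ y' * g θ₀ y')) • μ y • g' y) θ₀ := by
  have hbar : HasFDerivAt (fun θ => ∑ y', μ y' * g θ y') 0 θ₀ :=
    hmean ▸ HasFDerivAt.fun_sum fun y _ => (hg y).const_mul (μ y)
  refine (HasFDerivAt.fun_sum fun y _ => (((hg y).sub hbar).pow 2).const_mul (μ y)).congr_fderiv ?_
  refine sum_congr rfl fun y _ => ?_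
  rw [sub_zero, smul_comm, nsmul_eq_mul]
  norm_num

end Weighted

section Regularized

variable {X Y Θ : Type*} [NormedAddCommGroup Θ] [NormedSpace ℝ Θ]
  {πref r : X → Y → ℝ} {β : ℝ} {π : Θ → X → Y → ℝ} {θ₀ : Θ} {x : X}

theorem G_eq_sum_mul_Rreg [Fintype X] [Fintype Y] (ρ : X → ℝ) (π : X → Y → ℝ) :
    G ρ πref r β π = ∑ x, ρ x * ∑ y, π x y * Rreg πref r β π x y := by
  simp only [G, KLdiv, Rreg, mul_sum, ← sum_sub_distrib]
  exact sum_congr rfl fun x _ => sum_congr rfl fun y _ => by ring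

theorem hasFDerivAt_Rreg_s6 {y : Y} {D : Θ →L[ℝ] ℝ} (hπ : HasFDerivAt (fun θ => π θ x y) D θ₀)
    (hπ₀ : π θ₀ x y ≠ 0) (href : πref x y ≠ 0) :
    HasFDerivAt (fun θ => Rreg πref r β (π θ) x y) ((π θ₀ x y)⁻¹ • (-β) • D) θ₀ := by
  have hlog := (hπ.mul_const (πref x y)⁻¹).log (mul_ne_zero hπ₀ (inv_ne_zero href))
  refine ((hlog.const_mul β).const_sub (r x y)).congr_fderiv ?_
  ext v
  simp only [neg_apply, smul_apply, smul_eq_mul]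
  field_simp

variable [Fintype Y] {D : Y → Θ →L[ℝ] ℝ}

theorem hasFDerivAt_sum_mul_Rreg (hπ : ∀ y, HasFDerivAt (fun θ => π θ x y) (D y) θ₀)
    (hD : ∑ y, D y = 0) (hπ₀ : ∀ y, π θ₀ x y ≠ 0) (href : ∀ y, πref x y ≠ 0) :
    HasFDerivAt (fun θ => ∑ y, π θ x y * Rreg πref r β (π θ) x y)
      (∑ y, Rreg πref r β (π θ₀) x y • D y) θ₀ := by
  refine (HasFDerivAt.fun_sum fun y _ =>
    (hπ y).mul (hasFDerivAt_Rreg_s6 (r := r) (β := β) (hπ y) (hπ₀ y) (href y))).congr_fderiv ?_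
  simp only [fun y => smul_inv_smul₀ (hπ₀ y) ((-β) • D y), sum_add_distrib, ← smul_sum, hD,
    smul_zero, zero_add]

theorem hasFDerivAt_sum_mul_Rreg_sub_mean_sq (hπ : ∀ y, HasFDerivAt (fun θ => π θ x y) (D y) θ₀)
    (hD : ∑ y, D y = 0) (hπ₀ : ∀ y, π θ₀ x y ≠ 0) (href : ∀ y, πref x y ≠ 0) :
    HasFDerivAt (fun θ => ∑ y, π θ₀ x y *
        (Rreg πref r β (π θ) x y - ∑ y', π θ₀ x y' * Rreg πref r β (π θ) x y') ^ 2)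
      ((2 * -β) • ∑ y, Rreg πref r β (π θ₀) x y • D y) θ₀ := by
  have hscore : ∀ y, π θ₀ x y • (π θ₀ x y)⁻¹ • (-β) • D y = (-β) • D y :=
    fun y => smul_inv_smul₀ (hπ₀ y) _
  have hmean : ∑ y, π θ₀ x y • (π θ₀ x y)⁻¹ • (-β) • D y = 0 := by
    simp only [hscore, ← smul_sum, hD, smul_zero]
  refine (hasFDerivAt_sum_mul_sub_mean_sq
    (fun y => hasFDerivAt_Rreg_s6 (r := r) (β := β) (hπ y) (hπ₀ y) (href y)) hmean).congr_fderiv ?_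
  simp_rw [hscore, smul_sum, smul_smul]
  refine (sum_congr rfl fun y _ => congrArg (· • D y) ?_).trans
    (sum_sub_const_smul_of_sum_eq_zero (a := fun y => 2 * -β * Rreg πref r β (π θ₀) x y)
      (2 * -β * ∑ y', π θ₀ x y' * Rreg πref r β (π θ₀) x y') hD)
  ring

end Regularized

theorem pathwise_derivative_aligned_with_RLHF_gradient_general
    {X Y : Type*} [Fintype X] [Fintype Y]
    {Θ : Type*} [NormedAddCommGroup Θ] [NormedSpace ℝ Θ]
    (πref : X → Y → ℝ) (href_pos : ∀ x y, 0 < πref x y)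
    (r : X → Y → ℝ) (β : ℝ)
    (ρ : X → ℝ)
    (π : Θ → X → Y → ℝ) (hpos : ∀ θ x y, 0 < π θ x y) (hsum : ∀ θ x, ∑ y, π θ x y = 1)
    (θ₀ : Θ) (hdiff : ∀ x y, DifferentiableAt ℝ (fun θ => π θ x y) θ₀) :
    fderiv ℝ (fun θ => Lmu ρ πref r β (π θ₀) (π θ)) θ₀
      = (-β) • fderiv ℝ (fun θ => G ρ πref r β (π θ)) θ₀ := by
  set D : X → Y → Θ →L[ℝ] ℝ := fun x y => fderiv ℝ (fun θ => π θ x y) θ₀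
  have hD : ∀ x y, HasFDerivAt (fun θ => π θ x y) (D x y) θ₀ :=
    fun x y => (hdiff x y).hasFDerivAt
  have hD_sum : ∀ x, ∑ y, D x y = 0 :=
    fun x => sum_fderiv_eq_zero_of_sum_const (hsum · x) (hD x)
  have hπ₀ : ∀ x y, π θ₀ x y ≠ 0 := fun x y => (hpos θ₀ x y).ne'
  have href : ∀ x y, πref x y ≠ 0 := fun x y => (href_pos x y).ne'
  set S : X → Θ →L[ℝ] ℝ := fun x => ∑ y, Rreg πref r β (π θ₀) x y • D x y
  have hL : HasFDerivAt (fun θ => Lmu ρ πref r β (π θ₀) (π θ))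
      ((1 / 2 : ℝ) • ∑ x, ρ x • (2 * -β) • S x) θ₀ :=
    (HasFDerivAt.fun_sum fun x _ => (hasFDerivAt_sum_mul_Rreg_sub_mean_sq
      (hD x) (hD_sum x) (hπ₀ x) (href x)).const_mul (ρ x)).const_mul _
  have hG : HasFDerivAt (fun θ => G ρ πref r β (π θ)) (∑ x, ρ x • S x) θ₀ := by
    simp only [G_eq_sum_mul_Rreg]
    exact HasFDerivAt.fun_sum fun x _ =>
      (hasFDerivAt_sum_mul_Rreg (hD x) (hD_sum x) (hπ₀ x) (href x)).const_mul (ρ x)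
  rw [hL.fderiv, hG.fderiv, smul_sum, smul_sum]
  exact sum_congr rfl fun x _ => by simp only [smul_smul]; congr 1; ring

/-- with on-policy sampling `μ = π_{θ₀}`, the gradient of the off-policy
loss is aligned with the RLHF gradient: `∇ L_μ(π_θ)|_{θ₀} = -β ∇ G(π_θ)|_{θ₀}`. -/
theorem pathwise_derivative_aligned_with_RLHF_gradient
    {X Y : Type*} [Fintype X] [Fintype Y] [Nonempty X] [Nonempty Y]
    {Θ : Type*} [NormedAddCommGroup Θ] [NormedSpace ℝ Θ]
    (πref : X → Y → ℝ) (href_pos : ∀ x y, 0 < πref x y)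
    (href_sum : ∀ x, ∑ y, πref x y = 1)
    (r : X → Y → ℝ) (β : ℝ) (hβ : 0 < β)
    (ρ : X → ℝ) (hρ_nonneg : ∀ x, 0 ≤ ρ x) (hρ_sum : ∑ x, ρ x = 1)
    (π : Θ → X → Y → ℝ) (hpos : ∀ θ x y, 0 < π θ x y) (hsum : ∀ θ x, ∑ y, π θ x y = 1)
    (θ₀ : Θ) (hdiff : ∀ x y, DifferentiableAt ℝ (fun θ => π θ x y) θ₀) :
    fderiv ℝ (fun θ => Lmu ρ πref r β (π θ₀) (π θ)) θ₀
      = (-β) • fderiv ℝ (fun θ => G ρ πref r β (π θ)) θ₀ :=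
  pathwise_derivative_aligned_with_RLHF_gradient_general πref href_pos r β ρ π hpos hsum θ₀ hdiff
end
end

section
/- (Vanishing terms in the squared-regularizer gradient estimate) Suppose each conditional probability θ ↦ π_θ(v | y₁,…,y_{t−1}) is Fréchet differentiable at θ₀ and write π = π_{θ₀}. For all time indices t, t', s in {1,…,T} with t < s and t' < s: Σ_{y∈V^T} π(y) · log(π(y_t|y_{1:t−1})/π_ref(y_t|y_{1:t−1})) · log(π(y_{t'}|y_{1:t'−1})/π_ref(y_{t'}|y_{1:t'−1})) · D_θ[log π_θ(y_s | y_{1:s−1})](θ₀) = 0, where π(y) = Π_{u=1}^T π(y_u | y_{1:u−1}). -/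
/-!
Marginalising out the tokens after position `s` (each conditional sums to one) reduces the sum
to one over prefixes of length `s + 1`, in which the two log-ratio factors depend only on the
first `s` tokens. Summing over the last token then leaves the expected score
`∑ₐ π(a | p) • D log π(a | p) = D (∑ₐ π(a | p)) = D 1 = 0`.
-/

open Finset

noncomputable section

/-- Sequence probability of an autoregressive policy given by its conditionals:
`π(y) = ∏_{s=1}^T π(y_s | y_{1:s-1})`. -/
def seqP {V : Type*} [Fintype V] {T : ℕ} (cond : List V → V → ℝ) (y : Fin T → V) : ℝ :=
  ∏ u : Fin T, cond ((List.ofFn y).take u.1) (y u)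

section SeqP

variable {V : Type*} [Fintype V] {E : Type*} [AddCommGroup E] [Module ℝ E]
  (cond : List V → V → ℝ)

theorem List.ofFn_snoc {α : Type*} {n : ℕ} (z : Fin n → α) (a : α) :
    List.ofFn (Fin.snoc z a : Fin (n + 1) → α) = List.ofFn z ++ [a] := by
  rw [List.ofFn_succ']
  simp

theorem seqP_snoc {n : ℕ} (z : Fin n → V) (a : V) :
    seqP cond (Fin.snoc z a : Fin (n + 1) → V) = seqP cond z * cond (List.ofFn z) a := by
  simp only [seqP, Fin.prod_univ_castSucc, List.ofFn_snoc, Fin.snoc_castSucc, Fin.snoc_last,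
    Fin.val_castSucc, Fin.val_last]
  congr 1
  · refine prod_congr rfl fun u _ => ?_
    rw [List.take_append_of_le_length (by simp [u.2.le])]
  · rw [List.take_left' (List.length_ofFn)]

theorem sum_seqP_smul_snoc {n : ℕ} (G : (Fin (n + 1) → V) → E) :
    ∑ y, seqP cond y • G y
      = ∑ z : Fin n → V, seqP cond z • ∑ a, cond (List.ofFn z) a • G (Fin.snoc z a) := by
  rw [← (Fin.snocEquiv fun _ => V).sum_comp, Fintype.sum_prod_type, sum_comm]
  refine sum_congr rfl fun z _ => ?_
  rw [smul_sum]
  refine sum_congr rfl fun a _ => ?_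
  change seqP cond (Fin.snoc z a) • G (Fin.snoc z a) = _
  rw [seqP_snoc, mul_smul]

theorem sum_seqP_smul_take (hsum : ∀ p, ∑ v, cond p v = 1) {k n : ℕ} (hk : k ≤ n)
    (G : (Fin k → V) → E) :
    ∑ y : Fin n → V, seqP cond y • G (Fin.take k hk y) = ∑ z, seqP cond z • G z := by
  induction n, hk using Nat.le_induction with
  | base => simp only [Fin.take_eq_self]
  | succ n hk ih =>
    rw [sum_seqP_smul_snoc, ← ih]
    refine sum_congr rfl fun z _ => ?_
    have htake : ∀ a, Fin.take k (hk.trans n.le_succ) (Fin.snoc z a : Fin (n + 1) → V)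
        = Fin.take k hk z := fun a => by
      rw [← Fin.take_init k hk, Fin.init_snoc]
    simp only [htake, ← sum_smul, hsum, one_smul]

end SeqP

section Score

variable {V : Type*} [Fintype V] {Θ : Type*} [NormedAddCommGroup Θ] [NormedSpace ℝ Θ]

theorem sum_smul_fderiv_log_eq_zero (p : Θ → V → ℝ) (θ₀ : Θ) (hpos : ∀ v, p θ₀ v ≠ 0)
    (hsum : ∀ θ, ∑ v, p θ v = 1) (hdiff : ∀ v, DifferentiableAt ℝ (fun θ => p θ v) θ₀) :
    ∑ v, p θ₀ v • fderiv ℝ (fun θ => Real.log (p θ v)) θ₀ = 0 := by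
  have hscore : ∀ v, p θ₀ v • fderiv ℝ (fun θ => Real.log (p θ v)) θ₀
      = fderiv ℝ (fun θ => p θ v) θ₀ := fun v => by
    rw [((hdiff v).hasFDerivAt.log (hpos v)).fderiv, smul_smul, mul_inv_cancel₀ (hpos v),
      one_smul]
  simp_rw [hscore]
  rw [← fderiv_fun_sum fun v _ => hdiff v, funext hsum, fderiv_fun_const]
  rfl

variable (πθ : Θ → List V → V → ℝ) (θ₀ : Θ)

theorem sum_seqP_smul_score_last_eq_zero (hpos : ∀ p v, πθ θ₀ p v ≠ 0)
    (hsum : ∀ θ p, ∑ v, πθ θ p v = 1) (hdiff : ∀ p v, DifferentiableAt ℝ (fun θ => πθ θ p v) θ₀)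
    {n : ℕ} (c : (Fin n → V) → ℝ) :
    ∑ y : Fin (n + 1) → V, seqP (πθ θ₀) y •
      (c (Fin.init y) •
        fderiv ℝ (fun θ => Real.log (πθ θ (List.ofFn (Fin.init y)) (y (Fin.last n)))) θ₀) = 0 := by
  rw [sum_seqP_smul_snoc]
  refine sum_eq_zero fun z _ => ?_
  simp only [Fin.init_snoc, Fin.snoc_last, smul_comm _ (c z), ← smul_sum]
  rw [sum_smul_fderiv_log_eq_zero (fun θ => πθ θ (List.ofFn z)) θ₀ (hpos _) (hsum · _)
    (hdiff _), smul_zero, smul_zero]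

theorem sum_seqP_smul_score_eq_zero (hpos : ∀ p v, πθ θ₀ p v ≠ 0)
    (hsum : ∀ θ p, ∑ v, πθ θ p v = 1) (hdiff : ∀ p v, DifferentiableAt ℝ (fun θ => πθ θ p v) θ₀)
    {n : ℕ} (s : Fin n) (c : (Fin s → V) → ℝ) :
    ∑ y : Fin n → V, seqP (πθ θ₀) y •
      (c (Fin.take s s.2.le y) •
        fderiv ℝ (fun θ => Real.log (πθ θ ((List.ofFn y).take s) (y s))) θ₀) = 0 := by
  have hprefix : ∀ y : Fin n → V, (List.ofFn y).take s = List.ofFn (Fin.take s s.2.le y) :=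
    fun y => (Fin.ofFn_take_eq_take_ofFn _ y).symm
  simp only [hprefix]
  exact (sum_seqP_smul_take (πθ θ₀) (hsum θ₀) s.2 _).trans
    (sum_seqP_smul_score_last_eq_zero πθ θ₀ hpos hsum hdiff c)

end Score

theorem squared_regularizer_vanishing_terms_general
    {V : Type*} [Fintype V] {T : ℕ}
    {Θ : Type*} [NormedAddCommGroup Θ] [NormedSpace ℝ Θ]
    (πref : List V → V → ℝ)
    (πθ : Θ → List V → V → ℝ)
    (hpos : ∀ θ p v, 0 < πθ θ p v) (hsum : ∀ θ p, ∑ v, πθ θ p v = 1)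
    (θ₀ : Θ) (hdiff : ∀ p v, DifferentiableAt ℝ (fun θ => πθ θ p v) θ₀)
    (t t' s : Fin T) (hts : t < s) (ht's : t' < s) :
    ∑ y : Fin T → V,
      (seqP (πθ θ₀) y *
        (Real.log (πθ θ₀ ((List.ofFn y).take t.1) (y t)
            / πref ((List.ofFn y).take t.1) (y t)) *
          Real.log (πθ θ₀ ((List.ofFn y).take t'.1) (y t')
            / πref ((List.ofFn y).take t'.1) (y t')))) •
        fderiv ℝ (fun θ => Real.log (πθ θ ((List.ofFn y).take s.1) (y s))) θ₀
      = 0 := by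
  let logRatio (r : Fin T) (hr : r < s) (w : Fin s → V) : ℝ :=
    Real.log (πθ θ₀ ((List.ofFn w).take r) (w ⟨r, hr⟩) / πref ((List.ofFn w).take r) (w ⟨r, hr⟩))
  rw [← sum_seqP_smul_score_eq_zero πθ θ₀ (fun p v => (hpos θ₀ p v).ne') hsum hdiff s
    fun w => logRatio t hts w * logRatio t' ht's w]
  refine sum_congr rfl fun y _ => ?_
  have hprefix : ∀ r : Fin T, r < s →
      (List.ofFn (Fin.take s s.2.le y)).take r = (List.ofFn y).take r := fun r hr => by
    rw [Fin.ofFn_take_eq_take_ofFn, List.take_take, min_eq_left (Fin.le_def.mp hr.le)]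
  simp only [logRatio, hprefix t hts, hprefix t' ht's, mul_smul]
  rfl

/-- in the gradient estimate of the squared regularizer, the terms with
`t < s` and `t' < s` vanish in expectation. -/
theorem squared_regularizer_vanishing_terms
    {V : Type*} [Fintype V] [Nonempty V] {T : ℕ} (hT : 1 ≤ T)
    {Θ : Type*} [NormedAddCommGroup Θ] [NormedSpace ℝ Θ]
    (πref : List V → V → ℝ) (href_pos : ∀ p v, 0 < πref p v)
    (href_sum : ∀ p, ∑ v, πref p v = 1)
    (πθ : Θ → List V → V → ℝ)
    (hpos : ∀ θ p v, 0 < πθ θ p v) (hsum : ∀ θ p, ∑ v, πθ θ p v = 1)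
    (θ₀ : Θ) (hdiff : ∀ p v, DifferentiableAt ℝ (fun θ => πθ θ p v) θ₀)
    (t t' s : Fin T) (hts : t < s) (ht's : t' < s) :
    ∑ y : Fin T → V,
      (seqP (πθ θ₀) y *
        (Real.log (πθ θ₀ ((List.ofFn y).take t.1) (y t)
            / πref ((List.ofFn y).take t.1) (y t)) *
          Real.log (πθ θ₀ ((List.ofFn y).take t'.1) (y t')
            / πref ((List.ofFn y).take t'.1) (y t')))) •
        fderiv ℝ (fun θ => Real.log (πθ θ ((List.ofFn y).take s.1) (y s))) θ₀
      = 0 :=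
  squared_regularizer_vanishing_terms_general πref πθ hpos hsum θ₀ hdiff t t' s hts ht's
end
end
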